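/- arXiv:1604.05553 — 2 statements merged into one kernel-verified Lean document; each statement's English description precedes it below -/
import Mathlib

section
/- Conversely, if x_0 ∈ ℓ∞(ℤ) satisfies ‖(1/n) Σ_{j=1}^n S^j x_0 − z‖ = O(1/n) as n → ∞ for some constant sequence z, then x_0 − z lies in the range of S − I. -/
open BoundedContinuousFunction

/-- The right-shift operator `(S x)ₖ = x_{k-1}` on `ℓ∞(ℤ) = ℤ →ᵇ ℂ`. -/
noncomputable def shiftR : (ℤ →ᵇ ℂ) →L[ℂ] (ℤ →ᵇ ℂ) :=
  LinearMap.mkContinuous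
    { toFun := fun f => f.compContinuous ⟨fun k => k - 1, continuous_of_discreteTopology⟩
      map_add' := fun f g => by ext x; simp
      map_smul' := fun c f => by ext x; simp }
    1 (fun f => by simpa using f.norm_compContinuous_le _)

/-! Since `S` fixes the constant `z`, the `O(1/n)` bound on the Cesàro means says exactly that the
partial sums `∑_{j=1}^n Sʲ y` of `y = x₀ - z` are bounded. Evaluated at a point these are the window
sums `∑_{a ≤ i < b} y i`, so the primitive `k ↦ ∑_{0 ≤ i < k} y i` of `y` (extended to `k < 0`) is a
bounded sequence, and up to sign and a shift of the index it is a preimage of `y` under `S - 1`. -/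

open Finset

section CesaroMeans

variable {𝕜 E : Type*}

lemma cesaro_sub_fixedPoint [DivisionRing 𝕜] [CharZero 𝕜] [AddCommGroup E] [Module 𝕜 E]
    [TopologicalSpace E] (T : E →L[𝕜] E) {z : E} (hz : T z = z) {n : ℕ} (hn : n ≠ 0) (x : E) :
    (n : 𝕜)⁻¹ • ∑ j ∈ Icc 1 n, (T ^ j) x - z = (n : 𝕜)⁻¹ • ∑ j ∈ Icc 1 n, (T ^ j) (x - z) := by
  have hTj : ∀ j : ℕ, (T ^ j) z = z := fun j => by
    induction j with
    | zero => rfl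
    | succ j ih => rw [pow_succ, mul_apply_eq_comp, hz, ih]
  simp only [map_sub, hTj, sum_sub_distrib, sum_const, Nat.card_Icc, add_tsub_cancel_right,
    smul_sub, ← Nat.cast_smul_eq_nsmul 𝕜, smul_smul,
    inv_mul_cancel₀ ((Nat.cast_ne_zero (R := 𝕜)).2 hn), one_smul]

lemma norm_sum_pow_sub_le_of_norm_cesaro_sub_le [RCLike 𝕜] [NormedAddCommGroup E]
    [NormedSpace 𝕜 E] (T : E →L[𝕜] E) {z : E} (hz : T z = z) {n : ℕ} (hn : 1 ≤ n) {x : E}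
    {C : ℝ} (h : ‖(n : 𝕜)⁻¹ • ∑ j ∈ Icc 1 n, (T ^ j) x - z‖ ≤ C / n) :
    ‖∑ j ∈ Icc 1 n, (T ^ j) (x - z)‖ ≤ C := by
  have hn' : (0 : ℝ) < n := by exact_mod_cast hn
  rw [cesaro_sub_fixedPoint T hz (by omega), norm_smul, norm_inv, RCLike.norm_natCast,
    inv_mul_le_iff₀ hn'] at h
  rwa [mul_div_cancel₀ C hn'.ne'] at h

end CesaroMeans

section PartialSum

variable {G : Type*} [AddCommGroup G]

noncomputable def partialSum (y : ℤ → G) (k : ℤ) : G :=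
  ∑ i ∈ Ico 0 k, y i - ∑ i ∈ Ico k 0, y i

lemma partialSum_add_one_sub (y : ℤ → G) (k : ℤ) :
    partialSum y (k + 1) - partialSum y k = y k := by
  unfold partialSum
  rcases le_or_gt 0 k with hk | hk
  · rw [← insert_Ico_right_eq_Ico_add_one hk, sum_insert (by simp),
      Ico_eq_empty_of_le (by omega : (0 : ℤ) ≤ k + 1), Ico_eq_empty_of_le hk]
    abel
  · rw [← insert_Ico_add_one_left_eq_Ico hk, sum_insert (by simp),
      Ico_eq_empty_of_le (by omega : k + 1 ≤ 0), Ico_eq_empty_of_le hk.le]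
    abel

end PartialSum

lemma shiftR_apply (f : ℤ →ᵇ ℂ) (k : ℤ) : shiftR f k = f (k - 1) := rfl

lemma shiftR_pow_apply (f : ℤ →ᵇ ℂ) (j : ℕ) (k : ℤ) : (shiftR ^ j) f k = f (k - j) := by
  induction j generalizing k with
  | zero => simp
  | succ j ih =>
    rw [pow_succ', mul_apply_eq_comp, shiftR_apply, ih]
    congr 1
    push_cast
    ring

lemma shiftR_const (c : ℂ) : shiftR (const ℤ c) = const ℤ c := rfl

lemma sum_shiftR_pow_apply (y : ℤ →ᵇ ℂ) (n : ℕ) (m : ℤ) :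
    (∑ j ∈ Icc 1 n, (shiftR ^ j) y) m = ∑ i ∈ Ico (m - n) m, y i := by
  simp only [BoundedContinuousFunction.coe_sum, Finset.sum_apply, shiftR_pow_apply]
  refine sum_nbij' (fun j : ℕ => m - j) (fun i : ℤ => (m - i).toNat) ?_ ?_ ?_ ?_ fun _ _ => rfl
  all_goals intro _ h; simp only [mem_Icc, mem_Ico] at h ⊢; omega

lemma norm_sum_Ico_le_of_norm_sum_shiftR_pow_le {y : ℤ →ᵇ ℂ} {C : ℝ}
    (h : ∀ n : ℕ, 1 ≤ n → ‖∑ j ∈ Icc 1 n, (shiftR ^ j) y‖ ≤ C) (a b : ℤ) :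
    ‖∑ i ∈ Ico a b, y i‖ ≤ C := by
  rcases le_or_gt b a with hab | hab
  · simpa [Ico_eq_empty_of_le hab] using (norm_nonneg _).trans (h 1 le_rfl)
  · have hb := sum_shiftR_pow_apply y (b - a).toNat b
    rw [show b - ((b - a).toNat : ℤ) = a by omega] at hb
    rw [← hb]
    exact (norm_coe_le_norm _ _).trans (h _ (by omega))

lemma mem_range_shiftR_sub_one_of_norm_sum_le (y : ℤ →ᵇ ℂ) (C : ℝ)
    (h : ∀ n : ℕ, 1 ≤ n → ‖∑ j ∈ Icc 1 n, (shiftR ^ j) y‖ ≤ C) :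
    y ∈ Set.range ((shiftR - 1 : (ℤ →ᵇ ℂ) →L[ℂ] ℤ →ᵇ ℂ) : (ℤ →ᵇ ℂ) → ℤ →ᵇ ℂ) := by
  have hwindow := norm_sum_Ico_le_of_norm_sum_shiftR_pow_le h
  have hbound : ∀ k, ‖-partialSum y (k + 1)‖ ≤ C + C := fun k =>
    (norm_neg _).trans_le <| (norm_sub_le _ _).trans (add_le_add (hwindow _ _) (hwindow _ _))
  refine ⟨ofNormedAddCommGroupDiscrete (fun k => -partialSum y (k + 1)) _ hbound, ?_⟩
  ext k
  change -partialSum y (k - 1 + 1) - -partialSum y (k + 1) = y k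
  rw [sub_add_cancel, ← partialSum_add_one_sub y k]
  abel

theorem stmt10 (x₀ : ℤ →ᵇ ℂ) (c : ℂ)
    (h : ∃ C : ℝ, ∀ n : ℕ, 1 ≤ n →
      ‖(n : ℂ)⁻¹ • ∑ j ∈ Finset.Icc 1 n, (shiftR ^ j) x₀ -
        BoundedContinuousFunction.const ℤ c‖ ≤ C / n) :
    x₀ - BoundedContinuousFunction.const ℤ c ∈ Set.range ((shiftR - 1 : (ℤ →ᵇ ℂ) →L[ℂ] ℤ →ᵇ ℂ) : (ℤ →ᵇ ℂ) → ℤ →ᵇ ℂ) := by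
  obtain ⟨C, hC⟩ := h
  exact mem_range_shiftR_sub_one_of_norm_sum_le _ C fun n hn =>
    norm_sum_pow_sub_le_of_norm_cesaro_sub_le shiftR (shiftR_const c) hn (hC n hn)
end

section
/- There exists a sequence x_0 ∈ ℓ∞(ℤ) whose Cesàro shift-averages do not converge uniformly: for the sequence consisting (for negative indices) of alternating blocks of 0's and 1's with rapidly increasing lengths (say block j has length 4^j) and 0's for nonnegative indices, the averages (1/n) Σ_{j=1}^n x_{k−j} do not converge uniformly in k ∈ ℤ as n → ∞. -/
/-!
Block `J` of `badSeq` has length `4 ^ J`, so for every window length `n` there are windows of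
length `n` lying inside a block of zeros and inside a block of ones: the averages over them are
`0` and `1`, and no constant is uniformly within `1 / 3` of both.
-/

/-- The sequence with `x k = 0` for `k ≥ 0` and, for `k < 0`, alternating blocks of `0`s and
`1`s where block `j` (counting leftwards from index `-1`) has length `4^j`: the entry at
`k < 0` lies in block `j = Nat.log 4 (3 * m + 1)` where `m = -k - 1`, and equals `1` iff `j`
is odd. -/
noncomputable def badSeq : ℤ → ℂ := fun k =>
  if k < 0 ∧ Nat.log 4 (3 * (-k - 1).toNat + 1) % 2 = 1 then 1 else 0

open Finset

/-- Index `m = -k - 1` at which block `J` of `badSeq` starts. -/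
def blockStart (J : ℕ) : ℕ := (4 ^ J - 1) / 3

lemma three_mul_blockStart_add_one (J : ℕ) : 3 * blockStart J + 1 = 4 ^ J := by
  induction J with
  | zero => rfl
  | succ J ih =>
    unfold blockStart at *
    have h4 : (4 : ℕ) ^ (J + 1) = 4 * 4 ^ J := by ring
    omega

lemma log_four_blockStart_add {J i : ℕ} (hi : i < 4 ^ J) :
    Nat.log 4 (3 * (blockStart J + i) + 1) = J := by
  have hstart := three_mul_blockStart_add_one J
  have hpow : (4 : ℕ) ^ (J + 1) = 4 * 4 ^ J := by ring
  exact Nat.log_eq_of_pow_le_of_lt_pow (by omega) (by omega)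

lemma badSeq_neg_blockStart_sub {J j : ℕ} (hj₁ : 1 ≤ j) (hj : j ≤ 4 ^ J) :
    badSeq (-(blockStart J : ℤ) - j) = if J % 2 = 1 then 1 else 0 := by
  have hneg : -(blockStart J : ℤ) - j < 0 := by omega
  have hm : (-(-(blockStart J : ℤ) - j) - 1).toNat = blockStart J + (j - 1) := by omega
  simp only [badSeq, hneg, true_and, hm, log_four_blockStart_add (show j - 1 < 4 ^ J by omega)]

lemma inv_mul_sum_Icc_of_forall_eq {𝕜 : Type*} [DivisionRing 𝕜] [CharZero 𝕜] {n : ℕ}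
    (hn : n ≠ 0) {g : ℕ → 𝕜} {v : 𝕜} (hg : ∀ j ∈ Icc 1 n, g j = v) :
    (n : 𝕜)⁻¹ * ∑ j ∈ Icc 1 n, g j = v := by
  rw [sum_congr rfl hg, sum_const, Nat.card_Icc, add_tsub_cancel_right, nsmul_eq_mul,
    inv_mul_cancel_left₀ (Nat.cast_ne_zero.mpr hn)]

lemma badSeq_average_block {J n : ℕ} (hn : n ≠ 0) (hnJ : n ≤ 4 ^ J) :
    (n : ℂ)⁻¹ * ∑ j ∈ Icc 1 n, badSeq (-(blockStart J : ℤ) - j) =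
      if J % 2 = 1 then 1 else 0 :=
  inv_mul_sum_Icc_of_forall_eq hn fun _ hj ↦
    badSeq_neg_blockStart_sub (mem_Icc.mp hj).1 ((mem_Icc.mp hj).2.trans hnJ)

lemma not_exists_uniform_limit_of_frequently_apart {ι E : Type*} [SeminormedAddCommGroup E]
    (f : ℕ → ι → E) {δ : ℝ} (hδ : 0 < δ)
    (hapart : ∀ N, ∃ n ≥ N, ∃ k₀ k₁, δ ≤ ‖f n k₀ - f n k₁‖) :
    ¬ ∃ c : E, ∀ ε > (0 : ℝ), ∃ N : ℕ, ∀ n ≥ N, ∀ k, ‖f n k - c‖ ≤ ε := by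
  rintro ⟨c, hc⟩
  obtain ⟨N, hN⟩ := hc (δ / 3) (by positivity)
  obtain ⟨n, hn, k₀, k₁, hk⟩ := hapart N
  have htri := norm_sub_le_norm_sub_add_norm_sub (f n k₀) c (f n k₁)
  rw [norm_sub_rev c] at htri
  linarith [hN n hn k₀, hN n hn k₁]

theorem stmt16 :
    ¬ ∃ c : ℂ, ∀ ε > (0 : ℝ), ∃ N : ℕ, ∀ n ≥ N, ∀ k : ℤ,
      ‖(n : ℂ)⁻¹ * ∑ j ∈ Finset.Icc 1 n, badSeq (k - (j : ℤ)) - c‖ ≤ ε := by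
  refine not_exists_uniform_limit_of_frequently_apart
    (fun n k ↦ (n : ℂ)⁻¹ * ∑ j ∈ Icc 1 n, badSeq (k - j)) one_pos fun N ↦ ?_
  have hlt : N + 1 < 4 ^ (2 * (N + 1)) :=
    (Nat.lt_pow_self (by norm_num)).trans_le (Nat.pow_le_pow_right (by norm_num) (by omega))
  refine ⟨N + 1, by omega, -(blockStart (2 * (N + 1) + 1) : ℤ), -(blockStart (2 * (N + 1)) : ℤ), ?_⟩
  have hodd := badSeq_average_block (J := 2 * (N + 1) + 1) N.succ_ne_zero (by
    rw [pow_succ]; omega)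
  have heven := badSeq_average_block N.succ_ne_zero hlt.le
  simp only [hodd, heven]
  norm_num
end
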